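/- Let a < 0 and b ∈ ℝ. Then ∫_ℝ | Φ(ax + b) − 1{x < 0} | dx = ( 2φ(b) + 2Φ(b)b − b ) / (−a), where Φ and φ denote the standard normal distribution function and density function, respectively. -/

import Mathlib

open MeasureTheory Filter Topology Asymptotics
open scoped ENNReal NNReal symmDiff

noncomputable section

namespace LSBS

attribute [local instance] Classical.propDecidable

/-- The standard normal density `φ`. -/
def gpdf (t : ℝ) : ℝ := (Real.sqrt (2 * Real.pi))⁻¹ * Real.exp (-(t ^ 2) / 2)

/-- The standard normal distribution function `Φ`. -/
def gcdf (t : ℝ) : ℝ := ∫ u in Set.Iic t, gpdf u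

variable {d : ℕ}

/-- Euclidean space `ℝ^d`. -/
abbrev Evec (d : ℕ) := EuclideanSpace ℝ (Fin d)

/-- `μ_{f₀}(A) = ∫_A f₀(x) dx`. -/
def muF (f₀ : Evec d → ℝ) (A : Set (Evec d)) : ℝ := ∫ x in A, f₀ x

/-- The positive semidefinite square root of a matrix (junk value `0` if not psd). -/
def matSqrt (H : Matrix (Fin d) (Fin d) ℝ) : Matrix (Fin d) (Fin d) ℝ :=
  if h : H.PosSemidef then
    h.1.eigenvectorUnitary.1 * Matrix.diagonal ((RCLike.ofReal : ℝ → ℝ) ∘ Real.sqrt ∘ h.1.eigenvalues) *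
      (star h.1.eigenvectorUnitary : Matrix (Fin d) (Fin d) ℝ)
  else 0

/-- `H^{-1/2}`, the inverse of the psd square root. -/
def invSqrt (H : Matrix (Fin d) (Fin d) ℝ) : Matrix (Fin d) (Fin d) ℝ := (matSqrt H)⁻¹

/-- Apply a matrix to a Euclidean vector. -/
def mApply (M : Matrix (Fin d) (Fin d) ℝ) (v : Evec d) : Evec d := Matrix.toEuclideanLin M v

/-- Entrywise sup-norm of a matrix. -/
def matNorm (M : Matrix (Fin d) (Fin d) ℝ) : ℝ := ⨆ i, ⨆ j, |M i j|

/-- The kernel density estimator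
`f̂_{n,H}(x) = n⁻¹ ∑_{i<n} K(H^{-1/2}(x - Xᵢ)) |H|^{-1/2}`. -/
def kde (K : Evec d → ℝ) (H : Matrix (Fin d) (Fin d) ℝ) (X : ℕ → Evec d) (n : ℕ)
    (x : Evec d) : ℝ :=
  (n : ℝ)⁻¹ * ∑ i ∈ Finset.range n, K (mApply (invSqrt H) (x - X i)) * H.det ^ (-(1 : ℝ) / 2)

/-- `R(K) = ∫ K² dλ`. -/
def RK (K : Evec d → ℝ) : ℝ := ∫ x, (K x) ^ 2

/-- The Hessian matrix of `f` at `x`, via the second iterated Fréchet derivative. -/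
def hessian (f : Evec d → ℝ) (x : Evec d) : Matrix (Fin d) (Fin d) ℝ :=
  Matrix.of fun i j =>
    iteratedFDeriv ℝ 2 f x ![EuclideanSpace.single i (1 : ℝ), EuclideanSpace.single j (1 : ℝ)]

/-- `D₁(x,H) = ½ μ₂(K) tr(H ∇²f₀(x))`. -/
def D1 (μ₂ : ℝ) (f₀ : Evec d → ℝ) (H : Matrix (Fin d) (Fin d) ℝ) (x : Evec d) : ℝ :=
  (1 / 2) * μ₂ * (H * hessian f₀ x).trace

/-- Eigenvalues of a symmetric matrix (junk value `0` if not Hermitian). -/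
def eigs (H : Matrix (Fin d) (Fin d) ℝ) : Fin d → ℝ :=
  if h : H.IsHermitian then h.eigenvalues else 0

/-- Largest eigenvalue. -/
def lamMax (H : Matrix (Fin d) (Fin d) ℝ) : ℝ := ⨆ i, eigs H i

/-- Smallest eigenvalue. -/
def lamMin (H : Matrix (Fin d) (Fin d) ℝ) : ℝ := ⨅ i, eigs H i

/-- `f_τ(f) = inf { y > 0 : ∫ f 1{f ≥ y} dλ ≤ 1 - τ }`. -/
def tauLevel (τ : ℝ) (f : Evec d → ℝ) : ℝ :=
  sInf {y : ℝ | 0 < y ∧ (∫ x in {z | y ≤ f z}, f x) ≤ 1 - τ}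

/-- Variant of `tauLevel` with `y ≥ 0`. -/
def tauLevel0 (τ : ℝ) (f : Evec d → ℝ) : ℝ :=
  sInf {y : ℝ | 0 ≤ y ∧ (∫ x in {z | y ≤ f z}, f x) ≤ 1 - τ}

/-- The super-level set `{x : f(x) ≥ c}`. -/
def supLevel (f : Evec d → ℝ) (c : ℝ) : Set (Evec d) := {x | c ≤ f x}

/-- The level set (contour) `{x : f(x) = c}`. -/
def levelSet (f : Evec d → ℝ) (c : ℝ) : Set (Evec d) := {x | f x = c}

/-- `S^δ = ∪_{x ∈ S} B(x,δ)`. -/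
def tube (S : Set (Evec d)) (δ : ℝ) : Set (Evec d) := ⋃ x ∈ S, Metric.closedBall x δ

/-- `f` is a probability density on `ℝ^d`. -/
structure IsDensity (f : Evec d → ℝ) : Prop where
  nonneg : ∀ x, 0 ≤ f x
  integrable : MeasureTheory.Integrable f
  total : (∫ x, f x) = 1

/-- VC-type uniform covering number bound for a class of functions, with envelope. -/
def VCClass (𝓕 : Set (Evec d → ℝ)) : Prop :=
  ∃ F : Evec d → ℝ, (∀ f ∈ 𝓕, ∀ x, |f x| ≤ F x) ∧
    ∃ A v : ℝ, 0 < A ∧ 0 < v ∧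
      ∀ P : Measure (Evec d), IsProbabilityMeasure P → ∀ τ : ℝ, 0 < τ →
        ∃ G : Finset (Evec d → ℝ), (G.card : ℝ) ≤ (A / τ) ^ v ∧
          ∀ f ∈ 𝓕, ∃ g ∈ G, (∫ x, (f x - g x) ^ 2 ∂P) ≤ τ ^ 2 * ∫ x, (F x) ^ 2 ∂P

/-- The class `{ K(H^{-1/2}(t - ·)) : t ∈ ℝ^d, H ∈ 𝒮 }`. -/
def kerClass (K : Evec d → ℝ) : Set (Evec d → ℝ) :=
  {f | ∃ (t : Evec d) (H : Matrix (Fin d) (Fin d) ℝ), H.PosDef ∧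
    f = fun y => K (mApply (invSqrt H) (t - y))}

/-- The class `{ ‖∇K(H^{-1/2}(t - ·))‖ : t ∈ ℝ^d, H ∈ 𝒮 }`. -/
def gradKerClass (K : Evec d → ℝ) : Set (Evec d → ℝ) :=
  {f | ∃ (t : Evec d) (H : Matrix (Fin d) (Fin d) ℝ), H.PosDef ∧
    f = fun y => ‖gradient K (mApply (invSqrt H) (t - y))‖}

/-- Assumption K of the paper. -/
structure AssumptionK (K : Evec d → ℝ) (μ₂ : ℝ) : Prop where
  contDiff : ContDiff ℝ 1 K
  density : IsDensity K
  bounded : ∃ M, ∀ x, K x ≤ M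
  gradBounded : ∃ M, ∀ x, ‖gradient K x‖ ≤ M
  sqIntegrable : MeasureTheory.Integrable fun x => (K x) ^ 2
  gradProdIntegrable : ∀ i j : Fin d,
    MeasureTheory.Integrable fun x => gradient K x i * gradient K x j
  meanZero : ∀ i : Fin d, (∫ x, x i * K x) = 0
  secondMoment : ∀ i j : Fin d, (∫ x, x i * x j * K x) = if i = j then μ₂ else 0
  vcKer : VCClass (kerClass K)
  vcGradKer : VCClass (gradKerClass K)

/-- Assumption K2 of the paper: coordinatewise symmetry of `K` and square-integrable
first and second partial derivatives. -/
structure AssumptionK2 (K : Evec d → ℝ) : Prop where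
  symm : ∀ (x : Evec d) (i : Fin d),
    K (x - (2 * x i) • EuclideanSpace.single i (1 : ℝ)) = K x
  firstSq : ∀ i : Fin d, MeasureTheory.Integrable fun x => (gradient K x i) ^ 2
  secondSq : ∀ i j : Fin d, MeasureTheory.Integrable fun x => (hessian K x i j) ^ 2

/-- Assumption H of the paper, for the sequence of bandwidth matrices. -/
structure AssumptionH (Hseq : ℕ → Matrix (Fin d) (Fin d) ℝ) : Prop where
  symm : ∀ n, (Hseq n).IsSymm
  posDef : ∀ n, (Hseq n).PosDef
  detAnti : Antitone fun n => (Hseq n).det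
  detTendsto : Tendsto (fun n => (Hseq n).det) atTop (𝓝 0)
  ratio : Tendsto (fun n : ℕ => (n : ℝ) * (Hseq n).det ^ ((1 : ℝ) / 2) /
      Real.log ((Hseq n).det ^ (-(1 : ℝ) / 2))) atTop atTop
  loglog : Tendsto (fun n : ℕ => Real.log (Real.log (n : ℝ)) /
      Real.log ((Hseq n).det ^ (-(1 : ℝ) / 2))) atTop (𝓝 0)
  doubling : ∃ c : ℝ, 0 < c ∧ ∀ n,
      (Hseq n).det ^ ((1 : ℝ) / 2) ≤ c * (Hseq (2 * n)).det ^ ((1 : ℝ) / 2)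
  eigenComparable : (fun n => lamMax (Hseq n)) =O[atTop] fun n => lamMin (Hseq n)
  ratioMin : Tendsto (fun n : ℕ => (n : ℝ) * (Hseq n).det ^ ((1 : ℝ) / 2) * lamMin (Hseq n) /
      Real.log ((Hseq n).det ^ (-(1 : ℝ) / 2))) atTop atTop
  lamMaxBound : (fun n => lamMax (Hseq n)) =O[atTop]
      fun n : ℕ => (n : ℝ) ^ (-(2 : ℝ) / (4 + (d : ℝ)))

/-- Assumption H2 of the paper, for the pilot bandwidth sequences `H₀, H₁, H₂`. -/
structure AssumptionH2 (H0 H1 H2m : ℕ → Matrix (Fin d) (Fin d) ℝ) : Prop where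
  symm : ∀ n, (H0 n).IsSymm ∧ (H1 n).IsSymm ∧ (H2m n).IsSymm
  posDef : ∀ n, (H0 n).PosDef ∧ (H1 n).PosDef ∧ (H2m n).PosDef
  tendstoZero : ∀ i j, Tendsto (fun n => H0 n i j) atTop (𝓝 0) ∧
      Tendsto (fun n => H1 n i j) atTop (𝓝 0) ∧ Tendsto (fun n => H2m n i j) atTop (𝓝 0)
  r0 : Tendsto (fun n : ℕ => (n : ℝ)⁻¹ * (H0 n).det ^ (-(1 : ℝ) / 2)) atTop (𝓝 0)
  r1 : ∀ i j, Tendsto (fun n : ℕ => (n : ℝ)⁻¹ * (H1 n).det ^ (-(1 : ℝ) / 2) * (H1 n)⁻¹ i j)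
      atTop (𝓝 0)
  r2 : ∀ i j k l, Tendsto (fun n : ℕ => (n : ℝ)⁻¹ * (H2m n).det ^ (-(1 : ℝ) / 2) *
      ((H2m n)⁻¹ i j * (H2m n)⁻¹ k l)) atTop (𝓝 0)

/-- Assumption D1a of the paper (for the level-set problem at level `c`). -/
structure AssumptionD1a (f₀ : Evec d → ℝ) (c : ℝ) : Prop where
  bounded : BddAbove (Set.range f₀)
  smooth : ∃ a : ℝ, 0 < a ∧ ∃ V : Set (Evec d), IsOpen V ∧
    {x | c - a ≤ f₀ x ∧ f₀ x ≤ c + a} ⊆ V ∧ ContDiffOn ℝ 2 f₀ V ∧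
    (∃ M : ℝ, ∀ x ∈ V, ‖gradient f₀ x‖ ≤ M ∧ ∀ i j, |hessian f₀ x i j| ≤ M) ∧
    (∃ b : ℝ, 0 < b ∧ ∀ x, c - a ≤ f₀ x → f₀ x ≤ c + a → b ≤ ‖gradient f₀ x‖) ∧
    (∃ δ : ℝ, 0 < δ ∧ {x | c - a ≤ f₀ x ∧ f₀ x ≤ c + a} ⊆ tube (levelSet f₀ c) δ)

/-- Assumption D1b of the paper (for the HDR problem at level `f_{τ,0}`). -/
structure AssumptionD1b (f₀ : Evec d → ℝ) (ftau : ℝ) : Prop where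
  bounded : BddAbove (Set.range f₀)
  smooth : ContDiff ℝ 2 f₀
  derivBounded : ∃ M : ℝ, ∀ x, ‖gradient f₀ x‖ ≤ M ∧ ∀ i j, |hessian f₀ x i j| ≤ M
  levelNbhd : ∃ a : ℝ, 0 < a ∧
    (∃ b : ℝ, 0 < b ∧ ∀ x, ftau - a ≤ f₀ x → f₀ x ≤ ftau + a → b ≤ ‖gradient f₀ x‖) ∧
    (∃ δ : ℝ, 0 < δ ∧ {x | ftau - a ≤ f₀ x ∧ f₀ x ≤ ftau + a} ⊆ tube (levelSet f₀ ftau) δ)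

/-- Assumption D3 of the paper: four continuous, bounded, square-integrable derivatives. -/
structure AssumptionD3 (f₀ : Evec d → ℝ) : Prop where
  smooth : ContDiff ℝ 4 f₀
  bounded : ∀ k : ℕ, k ≤ 4 → ∃ M, ∀ x, ‖iteratedFDeriv ℝ k f₀ x‖ ≤ M
  sqIntegrable : ∀ k : ℕ, k ≤ 4 →
    MeasureTheory.Integrable fun x => ‖iteratedFDeriv ℝ k f₀ x‖ ^ 2

/-- `A_x = -‖∇f₀(x)‖ / √(R(K) c)`. -/
def Acoef (K : Evec d → ℝ) (f₀ : Evec d → ℝ) (c : ℝ) (x : Evec d) : ℝ :=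
  -(‖gradient f₀ x‖ / Real.sqrt (RK K * c))

/-- `B_x(H) = -√(n |H|^{1/2}) D₁(x,H) / √(R(K) c)`. -/
def Bcoef (K : Evec d → ℝ) (μ₂ : ℝ) (f₀ : Evec d → ℝ) (c : ℝ) (n : ℕ)
    (H : Matrix (Fin d) (Fin d) ℝ) (x : Evec d) : ℝ :=
  -(Real.sqrt ((n : ℝ) * H.det ^ ((1 : ℝ) / 2)) * D1 μ₂ f₀ H x / Real.sqrt (RK K * c))

/-- The asymptotic approximation `LS(H)` of the level-set risk. -/
def LSrisk (K : Evec d → ℝ) (μ₂ : ℝ) (f₀ : Evec d → ℝ) (c : ℝ) (n : ℕ)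
    (H : Matrix (Fin d) (Fin d) ℝ) : ℝ :=
  c / Real.sqrt ((n : ℝ) * H.det ^ ((1 : ℝ) / 2)) *
    ∫ x in levelSet f₀ c,
      (2 * gpdf (Bcoef K μ₂ f₀ c n H x) +
        2 * gcdf (Bcoef K μ₂ f₀ c n H x) * Bcoef K μ₂ f₀ c n H x -
        Bcoef K μ₂ f₀ c n H x) / -(Acoef K f₀ c x) ∂μH[(d : ℝ) - 1]

/-- `w₀ = (∫_{β_τ} ‖∇f₀‖⁻¹ dℋ)⁻¹`. -/
def w0 (f₀ : Evec d → ℝ) (ftau : ℝ) : ℝ :=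
  (∫ x in levelSet f₀ ftau, ‖gradient f₀ x‖⁻¹ ∂μH[(d : ℝ) - 1])⁻¹

/-- `V₁(H) = ∫_{β_τ} D₁(x,H)/‖∇f₀(x)‖ dℋ(x)`. -/
def V1 (μ₂ : ℝ) (f₀ : Evec d → ℝ) (ftau : ℝ) (H : Matrix (Fin d) (Fin d) ℝ) : ℝ :=
  ∫ x in levelSet f₀ ftau, D1 μ₂ f₀ H x / ‖gradient f₀ x‖ ∂μH[(d : ℝ) - 1]

/-- `V₂(H) = f_{τ,0}⁻¹ ∫_{L_τ} D₁(x,H) dx`. -/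
def V2 (μ₂ : ℝ) (f₀ : Evec d → ℝ) (ftau : ℝ) (H : Matrix (Fin d) (Fin d) ℝ) : ℝ :=
  ftau⁻¹ * ∫ x in supLevel f₀ ftau, D1 μ₂ f₀ H x

/-- `D₂(H) = w₀ (V₁(H) + V₂(H))`. -/
def D2c (μ₂ : ℝ) (f₀ : Evec d → ℝ) (ftau : ℝ) (H : Matrix (Fin d) (Fin d) ℝ) : ℝ :=
  w0 f₀ ftau * (V1 μ₂ f₀ ftau H + V2 μ₂ f₀ ftau H)

/-- `C_x(H) = B_x(H) + √(n|H|^{1/2}/(R(K) f_{τ,0})) D₂(H)`. -/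
def Ccoef (K : Evec d → ℝ) (μ₂ : ℝ) (f₀ : Evec d → ℝ) (ftau : ℝ) (n : ℕ)
    (H : Matrix (Fin d) (Fin d) ℝ) (x : Evec d) : ℝ :=
  Bcoef K μ₂ f₀ ftau n H x +
    Real.sqrt ((n : ℝ) * H.det ^ ((1 : ℝ) / 2) / (RK K * ftau)) * D2c μ₂ f₀ ftau H

/-- The asymptotic approximation `HDR(H)` of the HDR risk. -/
def HDRrisk (K : Evec d → ℝ) (μ₂ : ℝ) (f₀ : Evec d → ℝ) (ftau : ℝ) (n : ℕ)
    (H : Matrix (Fin d) (Fin d) ℝ) : ℝ :=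
  ftau / Real.sqrt ((n : ℝ) * H.det ^ ((1 : ℝ) / 2)) *
    ∫ x in levelSet f₀ ftau,
      (2 * gpdf (Ccoef K μ₂ f₀ ftau n H x) +
        2 * gcdf (Ccoef K μ₂ f₀ ftau n H x) * Ccoef K μ₂ f₀ ftau n H x -
        Ccoef K μ₂ f₀ ftau n H x) / -(Acoef K f₀ ftau x) ∂μH[(d : ℝ) - 1]

/-- `F_x = -½ μ₂(K) tr(∇²f(x)) / √(R(K) c)`, with a generic curvature function `fhess`. -/
def FxLS (K : Evec d → ℝ) (μ₂ c : ℝ) (fhess : Evec d → ℝ) (x : Evec d) : ℝ :=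
  -((1 / 2) * μ₂ * (hessian fhess x).trace / Real.sqrt (RK K * c))

/-- `A_x = -‖∇f(x)‖/√(R(K) c)`, with a generic gradient function `fgrad`. -/
def AxLS (K : Evec d → ℝ) (c : ℝ) (fgrad : Evec d → ℝ) (x : Evec d) : ℝ :=
  -(‖gradient fgrad x‖ / Real.sqrt (RK K * c))

/-- The (possibly plug-in) approximation `LS(h)` for bandwidths `h² I`:
`LS(h) = (c/(n h^d)^{1/2}) ∫_β [φ(B) + 2Φ(B)B − B]/(−A) dℋ` with
`B_x(h) = (n h^{d+4})^{1/2} F_x`. -/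
def LSgen (K : Evec d → ℝ) (μ₂ c : ℝ) (fgrad fhess : Evec d → ℝ) (β : Set (Evec d))
    (n : ℕ) (h : ℝ) : ℝ :=
  c / Real.sqrt ((n : ℝ) * h ^ d) *
    ∫ x in β,
      (gpdf (Real.sqrt ((n : ℝ) * h ^ (d + 4)) * FxLS K μ₂ c fhess x) +
        2 * gcdf (Real.sqrt ((n : ℝ) * h ^ (d + 4)) * FxLS K μ₂ c fhess x) *
          (Real.sqrt ((n : ℝ) * h ^ (d + 4)) * FxLS K μ₂ c fhess x) -
        Real.sqrt ((n : ℝ) * h ^ (d + 4)) * FxLS K μ₂ c fhess x) /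
        -(AxLS K c fgrad x) ∂μH[(d : ℝ) - 1]

/-- `AR_LS(s) = s^{−d/(d+4)} ∫_{β(c)} [φ(sF_x) + 2Φ(sF_x)sF_x − sF_x]/(−A_x) dℋ(x)`. -/
def ARLS (K : Evec d → ℝ) (μ₂ c : ℝ) (f₀ : Evec d → ℝ) (s : ℝ) : ℝ :=
  s ^ (-(d : ℝ) / ((d : ℝ) + 4)) *
    ∫ x in levelSet f₀ c,
      (gpdf (s * FxLS K μ₂ c f₀ x) + 2 * gcdf (s * FxLS K μ₂ c f₀ x) * (s * FxLS K μ₂ c f₀ x) -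
        s * FxLS K μ₂ c f₀ x) / -(AxLS K c f₀ x) ∂μH[(d : ℝ) - 1]

/-- `A_x = -‖∇f(x)‖/√(R(K) f_{τ,0})` (HDR version with generic gradient function). -/
def AxGen (K : Evec d → ℝ) (ftau : ℝ) (fgrad : Evec d → ℝ) (x : Evec d) : ℝ :=
  -(‖gradient fgrad x‖ / Real.sqrt (RK K * ftau))

/-- The quantity `G_x` of the HDR bandwidth-selection problem, with generic plug-ins. -/
def GxHDR (K : Evec d → ℝ) (μ₂ ftau : ℝ) (fgrad fhess : Evec d → ℝ)
    (β L : Set (Evec d)) (x : Evec d) : ℝ :=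
  -(μ₂ * (hessian fhess x).trace / Real.sqrt (RK K * ftau)) +
    ((∫ y in β, ‖gradient fgrad y‖⁻¹ ∂μH[(d : ℝ) - 1])⁻¹ *
        (∫ y in β, μ₂ * (hessian fhess y).trace / (2 * ‖gradient fgrad y‖)
          ∂μH[(d : ℝ) - 1]) +
      (∫ y in β, ‖gradient fgrad y‖⁻¹ ∂μH[(d : ℝ) - 1])⁻¹ / ftau *
        ∫ y in L, μ₂ * (hessian fhess y).trace / 2) / Real.sqrt (RK K * ftau)

/-- The (possibly plug-in) approximation `HDR(h)` for bandwidths `h² I`. -/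
def HDRgen (K : Evec d → ℝ) (μ₂ ftau : ℝ) (fgrad fhess : Evec d → ℝ)
    (β L : Set (Evec d)) (n : ℕ) (h : ℝ) : ℝ :=
  ftau / Real.sqrt ((n : ℝ) * h ^ d) *
    ∫ x in β,
      (gpdf (Real.sqrt ((n : ℝ) * h ^ (d + 4)) * GxHDR K μ₂ ftau fgrad fhess β L x) +
        2 * gcdf (Real.sqrt ((n : ℝ) * h ^ (d + 4)) * GxHDR K μ₂ ftau fgrad fhess β L x) *
          (Real.sqrt ((n : ℝ) * h ^ (d + 4)) * GxHDR K μ₂ ftau fgrad fhess β L x) -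
        Real.sqrt ((n : ℝ) * h ^ (d + 4)) * GxHDR K μ₂ ftau fgrad fhess β L x) /
        -(AxGen K ftau fgrad x) ∂μH[(d : ℝ) - 1]

/-- `AR_HDR(s) = s^{−d/(d+4)} ∫_{β_τ} [φ(sG_x) + 2Φ(sG_x)sG_x − sG_x]/(−A_x) dℋ(x)`. -/
def ARHDR (K : Evec d → ℝ) (μ₂ : ℝ) (f₀ : Evec d → ℝ) (ftau : ℝ) (s : ℝ) : ℝ :=
  s ^ (-(d : ℝ) / ((d : ℝ) + 4)) *
    ∫ x in levelSet f₀ ftau,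
      (gpdf (s * GxHDR K μ₂ ftau f₀ f₀ (levelSet f₀ ftau) (supLevel f₀ ftau) x) +
        2 * gcdf (s * GxHDR K μ₂ ftau f₀ f₀ (levelSet f₀ ftau) (supLevel f₀ ftau) x) *
          (s * GxHDR K μ₂ ftau f₀ f₀ (levelSet f₀ ftau) (supLevel f₀ ftau) x) -
        s * GxHDR K μ₂ ftau f₀ f₀ (levelSet f₀ ftau) (supLevel f₀ ftau) x) /
        -(AxGen K ftau f₀ x) ∂μH[(d : ℝ) - 1]

/-- `Yₙ = O_p(aₙ)`: boundedness in probability at rate `aₙ`. -/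
def IsBigOp {Ω : Type*} [MeasurableSpace Ω] (P : Measure Ω) (Y : ℕ → Ω → ℝ)
    (a : ℕ → ℝ) : Prop :=
  ∀ ε : ℝ, 0 < ε → ∃ C : ℝ, 0 < C ∧
    ∀ᶠ n in atTop, P {ω | C * |a n| < |Y n ω|} ≤ ENNReal.ofReal ε

/-!
The substitution `t = a x + b` turns the integral into `(-a)⁻¹ ∫ |Φ t - 1{t > b}| dt`. On `(b, ∞)`
the integrand is `1 - Φ`, whose antiderivative `t (1 - Φ t) - φ t` vanishes at `+∞` by Mills'
inequality `t (1 - Φ t) ≤ φ t`; this gives `∫_{t > b} (1 - Φ) = φ b + b Φ b - b`. On `(-∞, b]` the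
integrand is `Φ`, and the symmetry `Φ (-t) = 1 - Φ t` reduces it to the previous tail:
`∫_{t ≤ b} Φ = φ b + b Φ b`.
-/

open Set

lemma gpdf_eq_gaussianPDFReal : gpdf = ProbabilityTheory.gaussianPDFReal 0 1 := by
  funext x
  simp [gpdf, ProbabilityTheory.gaussianPDFReal]

lemma gpdf_nonneg (t : ℝ) : 0 ≤ gpdf t := by
  unfold gpdf; positivity

lemma gpdf_neg (t : ℝ) : gpdf (-t) = gpdf t := by simp [gpdf]

lemma continuous_gpdf : Continuous gpdf := by
  unfold gpdf; fun_prop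

lemma integrable_gpdf : Integrable gpdf := by
  rw [gpdf_eq_gaussianPDFReal]; exact ProbabilityTheory.integrable_gaussianPDFReal 0 1

lemma integral_gpdf : ∫ t, gpdf t = 1 := by
  rw [gpdf_eq_gaussianPDFReal]; exact ProbabilityTheory.integral_gaussianPDFReal_eq_one 0 one_ne_zero

lemma hasDerivAt_gpdf (t : ℝ) : HasDerivAt gpdf (-(t * gpdf t)) t := by
  have h : HasDerivAt (fun u : ℝ => -(u ^ 2) / 2) (-t) t := by
    simpa using ((hasDerivAt_pow 2 t).neg.div_const 2).congr_deriv (by ring)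
  exact (h.exp.const_mul (Real.sqrt (2 * Real.pi))⁻¹).congr_deriv (by unfold gpdf; ring)

lemma tendsto_gpdf_atTop : Tendsto gpdf atTop (𝓝 0) := by
  have h : Tendsto (fun t : ℝ => -(t ^ 2) / 2) atTop atBot :=
    (tendsto_neg_atTop_atBot.comp (tendsto_pow_atTop two_ne_zero)).atBot_div_const two_pos
  have := (Real.tendsto_exp_atBot.comp h).const_mul (Real.sqrt (2 * Real.pi))⁻¹
  rwa [mul_zero] at this

lemma hasDerivAt_gcdf (t : ℝ) : HasDerivAt gcdf (gpdf t) t := by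
  have h : gcdf = fun x => gcdf 0 + ∫ u in (0 : ℝ)..x, gpdf u := by
    funext x
    rw [← intervalIntegral.integral_Iic_sub_Iic integrable_gpdf.integrableOn
      integrable_gpdf.integrableOn]
    unfold gcdf; ring
  rw [h]
  exact (intervalIntegral.integral_hasDerivAt_right integrable_gpdf.intervalIntegrable
    continuous_gpdf.aestronglyMeasurable.stronglyMeasurableAtFilter
    continuous_gpdf.continuousAt).const_add _

lemma gcdf_nonneg (t : ℝ) : 0 ≤ gcdf t :=
  setIntegral_nonneg measurableSet_Iic fun u _ => gpdf_nonneg u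

lemma gcdf_le_one (t : ℝ) : gcdf t ≤ 1 := by
  rw [← integral_gpdf]
  exact setIntegral_le_integral integrable_gpdf (ae_of_all _ gpdf_nonneg)

lemma integral_Ioi_gpdf (t : ℝ) : ∫ u in Ioi t, gpdf u = 1 - gcdf t := by
  have h := intervalIntegral.integral_Iic_add_Ioi (b := t)
    integrable_gpdf.integrableOn integrable_gpdf.integrableOn
  rw [integral_gpdf] at h
  unfold gcdf
  linarith

lemma gcdf_neg (t : ℝ) : gcdf (-t) = 1 - gcdf t := by
  calc gcdf (-t) = ∫ u in Ioi t, gpdf (-u) := (integral_comp_neg_Ioi t gpdf).symm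
    _ = ∫ u in Ioi t, gpdf u := by simp only [gpdf_neg]
    _ = 1 - gcdf t := integral_Ioi_gpdf t

section FirstMoment

variable {t : ℝ}

lemma hasDerivAt_neg_gpdf (u : ℝ) : HasDerivAt (fun u => -gpdf u) (u * gpdf u) u :=
  (hasDerivAt_gpdf u).neg.congr_deriv (neg_neg _)

lemma mul_gpdf_nonneg_of_le (ht : 0 ≤ t) {u : ℝ} (hu : u ∈ Ioi t) : 0 ≤ u * gpdf u :=
  mul_nonneg (ht.trans (le_of_lt hu)) (gpdf_nonneg u)

lemma integrableOn_Ioi_mul_gpdf (ht : 0 ≤ t) : IntegrableOn (fun u => u * gpdf u) (Ioi t) :=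
  integrableOn_Ioi_deriv_of_nonneg' (fun u _ => hasDerivAt_neg_gpdf u)
    (fun _ hu => mul_gpdf_nonneg_of_le ht hu) (by simpa using tendsto_gpdf_atTop.neg)

lemma integral_Ioi_mul_gpdf (ht : 0 ≤ t) : ∫ u in Ioi t, u * gpdf u = gpdf t := by
  rw [integral_Ioi_of_hasDerivAt_of_nonneg' (fun u _ => hasDerivAt_neg_gpdf u)
    (fun _ hu => mul_gpdf_nonneg_of_le ht hu) (by simpa using tendsto_gpdf_atTop.neg)]
  ring

end FirstMoment

lemma mul_one_sub_gcdf_le_gpdf {t : ℝ} (ht : 0 ≤ t) : t * (1 - gcdf t) ≤ gpdf t := by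
  calc t * (1 - gcdf t) = ∫ u in Ioi t, t * gpdf u := by
        rw [integral_const_mul, integral_Ioi_gpdf]
    _ ≤ ∫ u in Ioi t, u * gpdf u :=
        setIntegral_mono_on (integrable_gpdf.integrableOn.const_mul t)
          (integrableOn_Ioi_mul_gpdf ht) measurableSet_Ioi
          fun u hu => mul_le_mul_of_nonneg_right (le_of_lt hu) (gpdf_nonneg u)
    _ = gpdf t := integral_Ioi_mul_gpdf ht

lemma tendsto_mul_one_sub_gcdf_atTop : Tendsto (fun t => t * (1 - gcdf t)) atTop (𝓝 0) :=
  squeeze_zero' (eventually_ge_atTop 0 |>.mono fun t ht =>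
      mul_nonneg ht (sub_nonneg.2 (gcdf_le_one t)))
    (eventually_ge_atTop 0 |>.mono fun _ ht => mul_one_sub_gcdf_le_gpdf ht) tendsto_gpdf_atTop

lemma hasDerivAt_mul_one_sub_gcdf_sub_gpdf (t : ℝ) :
    HasDerivAt (fun t => t * (1 - gcdf t) - gpdf t) (1 - gcdf t) t :=
  (((hasDerivAt_id t).mul ((hasDerivAt_gcdf t).const_sub 1)).sub (hasDerivAt_gpdf t)).congr_deriv
    (by simp only [id]; ring)

lemma tendsto_mul_one_sub_gcdf_sub_gpdf_atTop :
    Tendsto (fun t => t * (1 - gcdf t) - gpdf t) atTop (𝓝 0) := by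
  simpa using tendsto_mul_one_sub_gcdf_atTop.sub tendsto_gpdf_atTop

lemma integrableOn_Ioi_one_sub_gcdf (c : ℝ) : IntegrableOn (fun t => 1 - gcdf t) (Ioi c) :=
  integrableOn_Ioi_deriv_of_nonneg' (fun t _ => hasDerivAt_mul_one_sub_gcdf_sub_gpdf t)
    (fun t _ => sub_nonneg.2 (gcdf_le_one t)) tendsto_mul_one_sub_gcdf_sub_gpdf_atTop

lemma integral_Ioi_one_sub_gcdf (c : ℝ) :
    ∫ t in Ioi c, (1 - gcdf t) = gpdf c - c * (1 - gcdf c) := by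
  rw [integral_Ioi_of_hasDerivAt_of_nonneg' (fun t _ => hasDerivAt_mul_one_sub_gcdf_sub_gpdf t)
    (fun t _ => sub_nonneg.2 (gcdf_le_one t)) tendsto_mul_one_sub_gcdf_sub_gpdf_atTop]
  ring

lemma integrableOn_Iic_gcdf (b : ℝ) : IntegrableOn gcdf (Iic b) := by
  have h := ((Measure.measurePreserving_neg (volume : Measure ℝ)).integrableOn_comp_preimage
    (Homeomorph.neg ℝ).measurableEmbedding).2 (integrableOn_Ioi_one_sub_gcdf (-b))
  simp only [Function.comp_def, neg_preimage, neg_Ioi, neg_neg, ← gcdf_neg] at h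
  exact (integrableOn_Iic_iff_integrableOn_Iio).mpr h

lemma integral_Iic_gcdf (b : ℝ) : ∫ t in Iic b, gcdf t = gpdf b + b * gcdf b := by
  rw [← neg_neg b, ← integral_comp_neg_Ioi]
  simp only [gcdf_neg, integral_Ioi_one_sub_gcdf, gpdf_neg]
  ring

lemma integral_abs_gcdf_sub_indicator_Ioi (b : ℝ) :
    ∫ t, |gcdf t - (Ioi b).indicator (fun _ => (1 : ℝ)) t| = 2 * gpdf b + 2 * gcdf b * b - b := by
  set f := fun t => |gcdf t - (Ioi b).indicator (fun _ => (1 : ℝ)) t|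
  have hlow : EqOn f gcdf (Iic b) := fun t ht => by
    dsimp only [f]
    rw [indicator_of_notMem (notMem_Ioi.2 ht), sub_zero, abs_of_nonneg (gcdf_nonneg t)]
  have hup : EqOn f (fun t => 1 - gcdf t) (Ioi b) := fun t ht => by
    dsimp only [f]
    rw [indicator_of_mem ht, abs_sub_comm, abs_of_nonneg (sub_nonneg.2 (gcdf_le_one t))]
  rw [← intervalIntegral.integral_Iic_add_Ioi
      ((integrableOn_Iic_gcdf b).congr_fun hlow.symm measurableSet_Iic)
      ((integrableOn_Ioi_one_sub_gcdf b).congr_fun hup.symm measurableSet_Ioi),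
    setIntegral_congr_fun measurableSet_Iic hlow, setIntegral_congr_fun measurableSet_Ioi hup,
    integral_Iic_gcdf, integral_Ioi_one_sub_gcdf]
  ring

lemma integral_comp_mul_add_const {E : Type*} [NormedAddCommGroup E] [NormedSpace ℝ E]
    (g : ℝ → E) (a b : ℝ) : ∫ x, g (a * x + b) = |a⁻¹| • ∫ y, g y := by
  rw [Measure.integral_comp_mul_left (fun y => g (y + b)) a, integral_add_right_eq_self]

/-- **Lemma B.4 (normal integral identity).**
For `a < 0` and `b ∈ ℝ`,
`∫ℝ |Φ(ax + b) − 1{x<0}| dx = (2φ(b) + 2Φ(b)b − b)/(−a)`. -/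
theorem normal_integral (a b : ℝ) (ha : a < 0) :
    (∫ x : ℝ, |gcdf (a * x + b) - (Set.Iio (0 : ℝ)).indicator (fun _ => (1 : ℝ)) x|) =
      (2 * gpdf b + 2 * gcdf b * b - b) / (-a) := by
  have hind : ∀ x, (Iio 0).indicator (fun _ => (1 : ℝ)) x =
      (Ioi b).indicator (fun _ => 1) (a * x + b) := fun x => by
    simp only [indicator_apply, mem_Iio, mem_Ioi, lt_add_iff_pos_left,
      ← smul_eq_mul, smul_pos_iff_of_neg_left ha]
  simp_rw [hind]
  rw [integral_comp_mul_add_const (fun t => |gcdf t - (Ioi b).indicator (fun _ => (1 : ℝ)) t|),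
    integral_abs_gcdf_sub_indicator_Ioi, abs_inv, abs_of_neg ha, smul_eq_mul, div_eq_inv_mul]


end LSBS
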